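/- Let a = a₁⋯a_p and b = b₁⋯b_q be words with pairwise distinct entries (no entry appears in both) such that b is a non-trivial wave. Let 0 ≤ x ≤ p be maximal such that a₁ < a₂ < ⋯ < a_x < b_q (with x = 0 if a₁ > b_q). Then the word ins(a,b) = a₁⋯a_x b₁⋯b_q a_{x+1}⋯a_p satisfies sw(ins(a,b)) = b and ins(a,b) \ sw(ins(a,b)) = a. Moreover, for every word w whose entries are not in increasing order, ins(w \ sw(w), sw(w)) = w. -/

import Mathlib

namespace Paper

/-- number of descents of a word -/
def des : List ℕ → ℕ
  | a :: b :: t => (if b < a then 1 else 0) + des (b :: t)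
  | _ => 0

/-- number of inversions of a word -/
def inv : List ℕ → ℕ
  | [] => 0
  | a :: t => (t.countP fun x => decide (x < a)) + inv t

/-- a word is (strictly) increasing -/
def Incr (w : List ℕ) : Prop := w.Chain' (· < ·)

/-- a word is a hook: `a₁ > a₂` and `a₂ < a₃ < ⋯ < a_s`, length ≥ 2 -/
def IsHook : List ℕ → Prop
  | a :: b :: t => b < a ∧ (b :: t).Chain' (· < ·)
  | _ => False

/-- `(γ, hs)` is the hook factorization data of `w` -/
def IsHookFact (w γ : List ℕ) (hs : List (List ℕ)) : Prop :=
  Incr γ ∧ (∀ h ∈ hs, IsHook h) ∧ w = γ ++ hs.flatten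

/-- the statistic `lec` computed from the hooks of a factorization -/
def lecVal (hs : List (List ℕ)) : ℕ := (hs.map inv).sum

/-- one-line word of `σ ∈ S_n`, with entries in `[1..n]` -/
def word {n : ℕ} (σ : Equiv.Perm (Fin n)) : List ℕ :=
  List.ofFn fun i => (σ i : ℕ) + 1

/-- a word `w₁ ⋯ w_ℓ` with maximum in position `c` is a (nontrivial) reverse wave if
`c ≠ ℓ` and `w₁ < ⋯ < w_{c-1} < w_ℓ < w_{ℓ-1} < ⋯ < w_c`. -/
def IsRevWave (w : List ℕ) : Prop :=
  ∃ c, c + 1 < w.length ∧ (w.take c ++ (w.drop c).reverse).Chain' (· < ·)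

/-- a word `w₁ ⋯ w_ℓ` with maximum in position `c` is a (nontrivial) wave if
`c ≠ ℓ` and `w_ℓ < w_{ℓ-1} < ⋯ < w_{c+1} < w₁ < ⋯ < w_c`. -/
def IsWave (w : List ℕ) : Prop :=
  ∃ c, c + 1 < w.length ∧ ((w.drop (c + 1)).reverse ++ w.take (c + 1)).Chain' (· < ·)

/-- the maximal strictly decreasing run starting below `hi` and staying above `lo` -/
def decRun (hi lo : ℕ) : List ℕ → List ℕ
  | [] => []
  | b :: t => if b < hi ∧ lo < b then b :: decRun b lo t else []

def srwAux (lo : ℕ) : List ℕ → List ℕ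
  | [] => []
  | [a] => [a]
  | a :: b :: t => if a < b then a :: srwAux a (b :: t) else a :: decRun a lo (b :: t)

/-- the special reverse wave of a word: the prefix `w₁ ⋯ w_s` where `t` is the position of the
first descent (the whole word if none) and `s ≥ t` is maximal with
`w_t > w_{t+1} > ⋯ > w_s > w_{t-1}` (convention `w₀ = 0`). -/
def srw (w : List ℕ) : List ℕ := srwAux 0 w

/-- the number of special reverse descents: `des (srw w) + χ(w_s > w_{s+1})` -/
def srdes (w : List ℕ) : ℕ :=
  des (srw w) +
    match (srw w).getLast?, (w.drop (srw w).length).head? with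
    | some x, some y => if y < x then 1 else 0
    | _, _ => 0

/-- the prefix `w₁ ⋯ w_t` of `w` ending at the position `t` of the first descent
(the whole word if there is no descent) -/
def incrPrefix : List ℕ → List ℕ
  | [] => []
  | [a] => [a]
  | a :: b :: t => if a < b then a :: incrPrefix (b :: t) else [a]

/-- the special wave `w_r ⋯ w_t ⋯ w_s` of a word -/
def sw (w : List ℕ) : List ℕ :=
  let pre := incrPrefix w
  match w.drop pre.length with
  | [] => w
  | x :: rs =>
    let kept := pre.takeWhile fun u => decide (u < x)
    pre.drop kept.length ++ x :: decRun x (kept.getLastD 0) rs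

/-- the word `w \ sw(w) = w₁ ⋯ w_{r-1} w_{s+1} ⋯ w_ℓ` obtained removing the special wave -/
def swCompl (w : List ℕ) : List ℕ :=
  let pre := incrPrefix w
  match w.drop pre.length with
  | [] => []
  | x :: rs =>
    let kept := pre.takeWhile fun u => decide (u < x)
    kept ++ rs.drop (decRun x (kept.getLastD 0) rs).length

/-- insertion `ins(a,b) = a₁ ⋯ a_x b₁ ⋯ b_q a_{x+1} ⋯ a_p`, where `x` is maximal with
`a₁ < a₂ < ⋯ < a_x < b_q` -/
def ins (a b : List ℕ) : List ℕ :=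
  let pfx := (incrPrefix a).takeWhile fun u => decide (u < b.getLastD 0)
  pfx ++ b ++ a.drop pfx.length

/-- the word `ρ = ρ₁ ⋯ ρ_m` (entries in `[1..n]`) associated to an injection `Fin m ↪ Fin n` -/
def rho {n m : ℕ} (f : Fin m ↪ Fin n) : List ℕ :=
  List.ofFn fun j => (f j : ℕ) + 1

/-- descent number of the pair `(α₀, ρ)`: `des ρ + #{a ∈ α₀ : a > ρ₁}`,
where `α₀ = [n] \ {ρ₁, …, ρ_m}` -/
def desPair (n : ℕ) {m : ℕ} (f : Fin m ↪ Fin n) : ℕ :=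
  des (rho f) + ((Finset.Icc 1 n).filter fun a => a ∉ rho f ∧ (rho f).headI < a).card

/-- descent number of the pair `(α₀, ρ)`, with `ρ` given as a list -/
def desPairL (n : ℕ) (ρ : List ℕ) : ℕ :=
  des ρ + ((Finset.Icc 1 n).filter fun a => a ∉ ρ ∧ ρ.headI < a).card

/-- the map `μ`, sending `ρ` (with complementary set `α₀ = {α₁ < ⋯ < α_{n-k-1}}`) to
`α₁ ⋯ α_{n-k-m-1} α_{n-k-1} α_{n-k-2} ⋯ α_{n-k-m} ρ₁ ⋯ ρ_{k+1}`,
where `m = #{a ∈ α₀ : a > ρ₁}` -/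
def mu (n : ℕ) (ρ : List ℕ) : List ℕ :=
  let A := ((Finset.Icc 1 n).filter fun a => a ∉ ρ).sort (· ≤ ·)
  let m := (A.filter fun a => decide (ρ.headI < a)).length
  (A.take (A.length - m) ++ (A.drop (A.length - m)).reverse) ++ ρ

end Paper

/-!
Split a wave as `b = u ++ x :: d` with `u` increasing, `x :: d` decreasing and `x < u.head`, and
let `c` be its last letter. Inserting `b` into `a` after the longest increasing prefix `k` of `a`
below `c` makes the junction `u | x` the first descent of `ins a b`; as `k < c ≤ x < u`, the part of
the increasing prefix lying above `x` is exactly `u`, and the decreasing run from `x` stops at the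
end of `b` because the letter of `a` following `k` is either `≥ c` or at most the last letter of
`k` (it would otherwise extend `k`). Conversely, for any non-increasing `w` the cut defining `sw w`
satisfies the same conditions, which are exactly what makes `ins` put `sw w` back where it was
removed. Positivity of the letters accounts for the convention `w₀ = 0` when `k` is empty.
-/

namespace Paper

open List

theorem rel_getLastD_of_isChain {α : Type*} {R : α → α → Prop} [Std.Refl R] [Trans R R R]
    {x z : α} {l : List α} (h : (x :: l).IsChain R) (hz : z ∈ x :: l) : R z (l.getLastD x) := by
  rw [← getLast_eq_getLastD (cons_ne_nil x l)]
  exact (isChain_iff_pairwise.1 h).rel_getLast hz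

theorem incrPrefix_cons (a : ℕ) : ∀ l, ∃ t, incrPrefix (a :: l) = a :: t
  | [] => ⟨[], rfl⟩
  | b :: l => by
    rw [incrPrefix]
    split_ifs
    exacts [⟨_, rfl⟩, ⟨[], rfl⟩]

theorem incrPrefix_prefix : ∀ l : List ℕ, incrPrefix l <+: l
  | [] | [_] => prefix_rfl
  | a :: b :: l => by
    rw [incrPrefix]
    split_ifs
    exacts [cons_prefix_cons.2 ⟨rfl, incrPrefix_prefix (b :: l)⟩, ⟨b :: l, rfl⟩]

theorem isChain_incrPrefix : ∀ l : List ℕ, (incrPrefix l).IsChain (· < ·)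
  | [] | [_] => by simp [incrPrefix]
  | a :: b :: l => by
    rw [incrPrefix]
    split_ifs with hab
    · obtain ⟨t, ht⟩ := incrPrefix_cons b l
      rw [ht]
      exact isChain_cons_cons.2 ⟨hab, ht ▸ isChain_incrPrefix (b :: l)⟩
    · exact .singleton a

theorem incrPrefix_eq_self : ∀ {l : List ℕ}, l.IsChain (· < ·) → incrPrefix l = l
  | [], _ | [_], _ => rfl
  | a :: b :: l, h => by
    rw [isChain_cons_cons] at h
    rw [incrPrefix, if_pos h.1, incrPrefix_eq_self h.2]

theorem incrPrefix_append_of_le : ∀ {k : List ℕ}, k.IsChain (· < ·) → ∀ {y : ℕ},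
    (∃ x ∈ k.getLast?, y ≤ x) → ∀ m, incrPrefix (k ++ y :: m) = k
  | [], _, _, ⟨_, h, _⟩, _ => by simp at h
  | [a], _, y, ⟨x, hx, hy⟩, m => by
    simp only [getLast?_singleton, Option.mem_def, Option.some.injEq] at hx
    subst hx
    simp [incrPrefix, hy.not_gt]
  | a :: b :: k, h, y, hy, m => by
    rw [isChain_cons_cons] at h
    rw [cons_append, cons_append, incrPrefix, if_pos h.1, ← cons_append,
      incrPrefix_append_of_le h.2 (by simpa using hy) m]

theorem incrPrefix_append_of_lt : ∀ {k : List ℕ}, k.IsChain (· < ·) → ∀ {y : ℕ},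
    (∀ x ∈ k.getLast?, x < y) → ∀ m, incrPrefix (k ++ y :: m) = k ++ incrPrefix (y :: m)
  | [], _, _, _, _ => rfl
  | [a], _, y, hy, m => by
    rw [singleton_append, incrPrefix, if_pos (by simpa using hy)]
    rfl
  | a :: b :: k, h, y, hy, m => by
    rw [isChain_cons_cons] at h
    rw [cons_append, cons_append, incrPrefix, if_pos h.1, ← cons_append,
      incrPrefix_append_of_lt h.2 (by simpa using hy) m]
    rfl

theorem takeWhile_incrPrefix_append_eq_iff {k m : List ℕ} {c : ℕ} :
    (incrPrefix (k ++ m)).takeWhile (· < c) = k ↔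
      k.IsChain (· < ·) ∧ (∀ z ∈ k, z < c) ∧ ∀ z ∈ m.head?, z < c → ∃ y ∈ k.getLast?, z ≤ y := by
  constructor
  · intro h
    have hk : k.IsChain (· < ·) := (isChain_incrPrefix _).prefix (h ▸ takeWhile_prefix _)
    have hkc : ∀ z ∈ k, z < c := fun z hz => by
      rw [← h] at hz
      simpa using mem_takeWhile_imp hz
    refine ⟨hk, hkc, fun z hz hzc => ?_⟩
    obtain ⟨m, rfl⟩ : ∃ m', m = z :: m' := by
      cases m with
      | nil => simp at hz
      | cons z' m' => exact ⟨m', by simpa using hz⟩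
    by_contra! hlast
    obtain ⟨t, ht⟩ := incrPrefix_cons z m
    rw [incrPrefix_append_of_lt hk hlast, takeWhile_append_of_pos (by simpa using hkc), ht] at h
    simp [hzc] at h
  · rintro ⟨hk, hkc, hm⟩
    have hkc' : ∀ z ∈ k, decide (z < c) = true := by simpa using hkc
    cases m with
    | nil => rw [append_nil, incrPrefix_eq_self hk, takeWhile_eq_self_iff.2 hkc']
    | cons z m =>
      by_cases hz : ∃ y ∈ k.getLast?, z ≤ y
      · rw [incrPrefix_append_of_le hk hz, takeWhile_eq_self_iff.2 hkc']
      · push Not at hz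
        have hcz : ¬ z < c := fun hzc => by
          obtain ⟨y, hy, hzy⟩ := hm z rfl hzc
          exact (hz y hy).not_ge hzy
        obtain ⟨t, ht⟩ := incrPrefix_cons z m
        rw [incrPrefix_append_of_lt hk hz, takeWhile_append_of_pos hkc', ht]
        simp [hcz]

theorem exists_eq_append_takeWhile_incrPrefix (a : List ℕ) (c : ℕ) :
    ∃ k m, a = k ++ m ∧ (incrPrefix (k ++ m)).takeWhile (· < c) = k := by
  have h := prefix_iff_eq_append.1 ((takeWhile_prefix (· < c)).trans (incrPrefix_prefix a))
  exact ⟨_, _, h.symm, by rw [h]⟩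

theorem ins_append_of_takeWhile_incrPrefix_eq {k m b : List ℕ}
    (h : (incrPrefix (k ++ m)).takeWhile (· < b.getLastD 0) = k) :
    ins (k ++ m) b = k ++ b ++ m := by
  simp only [ins, h, drop_left]

theorem decRun_prefix (hi lo : ℕ) : ∀ l, decRun hi lo l <+: l
  | [] => prefix_rfl
  | b :: l => by
    rw [decRun]
    split_ifs
    exacts [cons_prefix_cons.2 ⟨rfl, decRun_prefix b lo l⟩, nil_prefix]

theorem decRun_append_eq_iff {lo : ℕ} {m : List ℕ} : ∀ {hi : ℕ} {d : List ℕ},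
    decRun hi lo (d ++ m) = d ↔
      (hi :: d).IsChain (· > ·) ∧ (∀ z ∈ d, lo < z) ∧ ∀ z ∈ m.head?, lo < z → d.getLastD hi ≤ z
  | hi, [] => by
    cases m with
    | nil => simp [decRun]
    | cons z m => grind [decRun]
  | hi, b :: d => by
    rw [cons_append, decRun]
    by_cases h : b < hi ∧ lo < b
    · rw [if_pos h, cons.injEq, decRun_append_eq_iff, isChain_cons_cons, forall_mem_cons,
        getLastD_cons]
      simp [h]
    · rw [if_neg h]
      simp only [reduceCtorEq, false_iff, isChain_cons_cons, forall_mem_cons]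
      tauto

/-- The cut made by `sw`, in the notation of the paper: `k ++ u = w₁ ⋯ w_t` is the increasing
prefix, `k = w₁ ⋯ w_{r-1}` its part below `x = w_{t+1}`, and `x :: d = w_{t+1} ⋯ w_s`. -/
structure IsSwSplit (w k u : List ℕ) (x : ℕ) (d m : List ℕ) : Prop where
  eq_append : w = k ++ u ++ x :: (d ++ m)
  incrPrefix_eq : incrPrefix w = k ++ u
  takeWhile_eq : (k ++ u).takeWhile (· < x) = k
  decRun_eq : decRun x (k.getLastD 0) (d ++ m) = d

namespace IsSwSplit

variable {w k u d m : List ℕ} {x : ℕ}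

theorem drop_eq (h : IsSwSplit w k u x d m) : w.drop (k ++ u).length = x :: (d ++ m) := by
  rw [h.eq_append, drop_left]

theorem sw_eq (h : IsSwSplit w k u x d m) : sw w = u ++ x :: d := by
  simp only [sw, h.drop_eq, h.incrPrefix_eq, h.takeWhile_eq, h.decRun_eq, drop_left]

theorem swCompl_eq (h : IsSwSplit w k u x d m) : swCompl w = k ++ m := by
  simp only [swCompl, h.drop_eq, h.incrPrefix_eq, h.takeWhile_eq, h.decRun_eq, drop_left]

end IsSwSplit

theorem exists_isSwSplit {w : List ℕ} (hw : ¬ Incr w) : ∃ k u x d m, IsSwSplit w k u x d m := by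
  obtain ⟨r, hr⟩ := incrPrefix_prefix w
  obtain ⟨x, rs, rfl⟩ : ∃ x rs, r = x :: rs := by
    cases r with
    | nil =>
      rw [append_nil] at hr
      exact absurd (hr ▸ isChain_incrPrefix w) hw
    | cons x rs => exact ⟨x, rs, rfl⟩
  set P := incrPrefix w
  set k := P.takeWhile (· < x)
  set d := decRun x (k.getLastD 0) rs
  have hP : k ++ P.drop k.length = P := prefix_iff_eq_append.1 (takeWhile_prefix _)
  have hrs : d ++ rs.drop d.length = rs := prefix_iff_eq_append.1 (decRun_prefix ..)
  refine ⟨k, P.drop k.length, x, d, rs.drop d.length, ?_, ?_, ?_, ?_⟩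
  · rw [hP, hrs, hr]
  · rw [hP]
  · rw [hP]
  · rw [hrs]

theorem IsWave.exists_eq_append {b : List ℕ} (hb : IsWave b) : ∃ y u x d,
    b = y :: u ++ x :: d ∧ (y :: u).IsChain (· < ·) ∧ (x :: d).IsChain (· > ·) ∧ x < y := by
  obtain ⟨c, hc, hchain⟩ := hb
  obtain ⟨x, d, hxd⟩ : ∃ x d, b.drop (c + 1) = x :: d :=
    exists_cons_of_ne_nil (ne_nil_of_length_pos (by rw [length_drop]; omega))
  obtain ⟨y, u, hyu⟩ : ∃ y u, b.take (c + 1) = y :: u :=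
    exists_cons_of_ne_nil (ne_nil_of_length_pos (by rw [length_take]; omega))
  rw [hxd, hyu] at hchain
  obtain ⟨hdx, hyu', hxy⟩ := isChain_append.1 hchain
  exact ⟨y, u, x, d, by rw [← hxd, ← hyu, take_append_drop], hyu', isChain_reverse.1 hdx,
    hxy x (by simp) y rfl⟩

theorem exists_isSwSplit_ins {a b : List ℕ} (hb : IsWave b) (hpos : ∀ z ∈ b, 0 < z) :
    ∃ k u x d m, a = k ++ m ∧ b = u ++ x :: d ∧ IsSwSplit (ins a b) k u x d m := by
  obtain ⟨y, u, x, d, rfl, hyu, hxd, hxy⟩ := hb.exists_eq_append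
  set c := d.getLastD x
  have hlast : (y :: u ++ x :: d).getLastD 0 = c := by simp [c, getLast?_cons]
  have hc : ∀ z ∈ x :: d, c ≤ z := fun z hz =>
    rel_getLastD_of_isChain (R := (· ≥ ·)) (hxd.imp fun _ _ => le_of_lt) hz
  obtain ⟨k, m, rfl, hkm⟩ := exists_eq_append_takeWhile_incrPrefix a c
  obtain ⟨hk, hkc, hmc⟩ := takeWhile_incrPrefix_append_eq_iff.1 hkm
  have hkx : ∀ p ∈ k, p < x := fun p hp => (hkc p hp).trans_le (hc x mem_cons_self)
  have hlo : k.getLastD 0 < c := by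
    cases k with
    | nil => exact hpos c (mem_append_right (y :: u) getLastD_mem_cons)
    | cons p k => exact hkc _ (by rw [getLastD_cons]; exact getLastD_mem_cons)
  have hins : ins (k ++ m) (y :: u ++ x :: d) = k ++ (y :: u) ++ x :: (d ++ m) := by
    rw [ins_append_of_takeWhile_incrPrefix_eq (hlast ▸ hkm)]
    simp
  refine ⟨k, y :: u, x, d, m, rfl, rfl, hins ▸ ⟨rfl, ?_, ?_, ?_⟩⟩
  · have hyu_last : y ≤ u.getLastD y :=
      rel_getLastD_of_isChain (hyu.imp fun _ _ => le_of_lt) mem_cons_self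
    refine incrPrefix_append_of_le (hk.append hyu ?_) ⟨u.getLastD y, ?_, hxy.le.trans hyu_last⟩
      (d ++ m)
    · intro p hp z hz
      cases hz
      exact (hkx p (mem_of_mem_getLast? hp)).trans hxy
    · simp [getLast?_cons]
  · rw [takeWhile_append_of_pos (by simpa using hkx)]
    simp [hxy.le]
  · refine decRun_append_eq_iff.2
      ⟨hxd, fun z hz => hlo.trans_le (hc z (mem_cons_of_mem _ hz)), fun z hz hloz => ?_⟩
    by_contra! hzc
    obtain ⟨p, hp, hzp⟩ := hmc z hz hzc
    rw [getLastD_eq_getLast?, Option.mem_def.1 hp] at hloz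
    exact hloz.not_ge hzp

theorem ins_swCompl_sw {w : List ℕ} (hw : ¬ Incr w) (hpos : ∀ z ∈ w, 0 < z) :
    ins (swCompl w) (sw w) = w := by
  obtain ⟨k, u, x, d, m, h⟩ := exists_isSwSplit hw
  have hk : k.IsChain (· < ·) := (isChain_incrPrefix w).prefix (h.incrPrefix_eq ▸ prefix_append k u)
  have hkx : ∀ z ∈ k, z < x := fun z hz => by
    rw [← h.takeWhile_eq] at hz
    simpa using mem_takeWhile_imp hz
  obtain ⟨-, hdlo, hm⟩ := decRun_append_eq_iff.1 h.decRun_eq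
  set c := d.getLastD x
  have hkc : ∀ z ∈ k, z < c := fun z hz => by
    rcases mem_cons.1 (getLastD_mem_cons : c ∈ x :: d) with hcx | hcd
    · exact (hkx z hz).trans_eq hcx.symm
    · cases k with
      | nil => cases hz
      | cons p k =>
        have hzlo : z ≤ k.getLastD p := rel_getLastD_of_isChain (hk.imp fun _ _ => le_of_lt) hz
        exact hzlo.trans_lt (getLastD_cons ▸ hdlo c hcd)
  have hlast : (u ++ x :: d).getLastD 0 = c := by simp [c, getLast?_cons]
  have hcut : (incrPrefix (k ++ m)).takeWhile (· < (u ++ x :: d).getLastD 0) = k := by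
    rw [hlast]
    refine takeWhile_incrPrefix_append_eq_iff.2 ⟨hk, hkc, fun z hz hzc => ?_⟩
    have hz0 : 0 < z := hpos z (by simp [h.eq_append, mem_of_mem_head? hz])
    have hzlo : z ≤ k.getLastD 0 := by
      by_contra! hloz
      exact hzc.not_ge (hm z hz hloz)
    cases k with
    | nil => exact absurd hzlo hz0.not_ge
    | cons p k => exact ⟨_, by simp [getLast?_cons], hzlo⟩
  rw [h.sw_eq, h.swCompl_eq, ins_append_of_takeWhile_incrPrefix_eq hcut, h.eq_append]
  simp

end Paper

/-- if `a`, `b` are words with pairwise distinct entries and `b` is a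
non-trivial wave, then `ins a b` (insertion of `b` inside `a` after the maximal increasing
prefix of `a` whose entries are smaller than the last entry of `b`) satisfies
`sw (ins a b) = b` and `(ins a b) \ sw (ins a b) = a`; moreover for every word `w` not in
increasing order, `ins (w \ sw w) (sw w) = w`. -/
theorem Paper.statement13 :
    (∀ a b : List ℕ, (a ++ b).Nodup → (∀ x ∈ a ++ b, 0 < x) → IsWave b →
      sw (ins a b) = b ∧ swCompl (ins a b) = a) ∧
    (∀ w : List ℕ, w.Nodup → (∀ x ∈ w, 0 < x) → ¬ Incr w →
      ins (swCompl w) (sw w) = w) := by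
  refine ⟨fun a b _ hpos hb => ?_, fun w _ hpos hw => ins_swCompl_sw hw hpos⟩
  obtain ⟨k, u, x, d, m, rfl, rfl, h⟩ :=
    exists_isSwSplit_ins (a := a) hb fun z hz => hpos z (List.mem_append_right a hz)
  exact ⟨h.sw_eq, h.swCompl_eq⟩
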